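/- arXiv:1906.06745 — 6 statements merged into one kernel-verified Lean document; each statement's English description precedes it below -/
import Mathlib

section
/- Let N be a natural number and let f : E → (ℚ≥0)^(N+1) be a function with self-bounding denominators, witnessed by increasing functions D_i : (ℚ≥0)^i → ℤ>0 for 1 ≤ i ≤ N. Define F : E → (ℤ≥0)^(N+1) by letting the first component of F(x) equal the first component of f(x), and for 1 ≤ i ≤ N letting the (i+1)-th component of F(x) equal D_i(pr_{≤i}(f(x))) · pr_{i+1}(f(x)). Then for all x, y ∈ E one has f(x) ≤ f(y) in the lexicographic order if and only if F(x) ≤ F(y) in the lexicographic order. (Paper's Fact III.b.) -/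
/-!
Write `F x = G (f x)`, where `G v` keeps `v 0` and multiplies `v (i+1)` by `D i` evaluated on the
prefix `v 0, …, v i`. At the first index where `f x` and `f y` differ their prefixes agree, so the
same positive factor multiplies both entries and the strict inequality survives; earlier entries of
`G` only see equal prefixes. Hence `G` is strictly monotone for the lexicographic order, and a
strictly monotone map out of a linear order reflects `≤` as well.
-/

open scoped NNRat

namespace Pi.Lex

variable {ι : Type*} {α β : ι → Type*}

theorem map_lt_map_of_prefix [LinearOrder ι] [∀ i, LT (α i)] [∀ i, LT (β i)]
    (G : (∀ i, α i) → ∀ i, β i)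
    (hG_eq : ∀ v w i, (∀ j ≤ i, v j = w j) → G v i = G w i)
    (hG_lt : ∀ v w i, (∀ j < i, v j = w j) → v i < w i → G v i < G w i)
    {v w : ∀ i, α i} (hvw : toLex v < toLex w) : toLex (G v) < toLex (G w) := by
  obtain ⟨i, hpre, hi⟩ := hvw
  exact ⟨i, fun j hj => hG_eq v w j fun k hk => hpre k (hk.trans_lt hj), hG_lt v w i hpre hi⟩

theorem map_le_map_iff_of_prefix [LinearOrder ι] [WellFoundedLT ι] [∀ i, LinearOrder (α i)]
    [∀ i, PartialOrder (β i)] (G : (∀ i, α i) → ∀ i, β i)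
    (hG_eq : ∀ v w i, (∀ j ≤ i, v j = w j) → G v i = G w i)
    (hG_lt : ∀ v w i, (∀ j < i, v j = w j) → v i < w i → G v i < G w i)
    (v w : ∀ i, α i) : toLex (G v) ≤ toLex (G w) ↔ toLex v ≤ toLex w :=
  StrictMono.le_iff_le (f := fun u : Lex (∀ i, α i) => toLex (G (ofLex u)))
    (fun _ _ => map_lt_map_of_prefix G hG_eq hG_lt)

theorem comp_le_comp_iff [LinearOrder ι] [WellFoundedLT ι] {γ δ : Type*} [LinearOrder γ]
    [PartialOrder δ] {g : γ → δ} (hg : StrictMono g) (v w : ι → γ) :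
    toLex (g ∘ v) ≤ toLex (g ∘ w) ↔ toLex v ≤ toLex w :=
  map_le_map_iff_of_prefix (fun u => g ∘ u)
    (fun _ _ i h => congrArg g (h i le_rfl)) (fun _ _ _ _ h => hg h) v w

end Pi.Lex

section ClearDenominators

variable {N : ℕ}

def clearDenominators (D : (i : Fin N) → (Fin (i.1 + 1) → ℚ≥0) → ℕ) (v : Fin (N + 1) → ℚ≥0) :
    Fin (N + 1) → ℚ≥0 :=
  Fin.cons (v 0) fun i => (D i (fun j => v (Fin.castLE (Nat.le_succ_of_le i.isLt) j)) : ℚ≥0) *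
    v i.succ

theorem clearDenominators_prefix_eq {v w : Fin (N + 1) → ℚ≥0} {i : Fin N}
    (h : ∀ j < i.succ, v j = w j) :
    (fun j => v (Fin.castLE (Nat.le_succ_of_le i.isLt) j)) =
      fun j => w (Fin.castLE (Nat.le_succ_of_le i.isLt) j) :=
  funext fun j => h _ (Fin.lt_def.2 (by simp only [Fin.val_castLE, Fin.val_succ]; exact j.isLt))

theorem clearDenominators_le_iff (D : (i : Fin N) → (Fin (i.1 + 1) → ℚ≥0) → ℕ)
    (hDpos : ∀ i v, 0 < D i v) (v w : Fin (N + 1) → ℚ≥0) :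
    toLex (clearDenominators D v) ≤ toLex (clearDenominators D w) ↔ toLex v ≤ toLex w := by
  refine Pi.Lex.map_le_map_iff_of_prefix _ ?_ ?_ v w
  · intro v w i h
    cases i using Fin.cases with
    | zero => exact h 0 le_rfl
    | succ i =>
      simp only [clearDenominators, Fin.cons_succ]
      rw [clearDenominators_prefix_eq fun j hj => h j hj.le, h _ le_rfl]
  · intro v w i h hi
    cases i using Fin.cases with
    | zero => exact hi
    | succ i =>
      simp only [clearDenominators, Fin.cons_succ]
      rw [clearDenominators_prefix_eq h]
      exact mul_lt_mul_of_pos_left hi (mod_cast hDpos _ _)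

end ClearDenominators

theorem fact_III_b_general (N : ℕ) (E : Type*) (f : E → Fin (N + 1) → ℚ≥0)
    -- (ii) the self-bounding witnesses `D i : (ℚ≥0)^(i+1) → ℤ>0` for `i+1 = 1, …, N`
    (D : (i : Fin N) → (Fin (i.1 + 1) → ℚ≥0) → ℕ)
    (hDpos : ∀ (i : Fin N) (v : Fin (i.1 + 1) → ℚ≥0), 0 < D i v)
    -- the function `F : E → (ℤ≥0)^(N+1)`
    (F : E → Fin (N + 1) → ℕ)
    (hF0 : ∀ x : E, (F x 0 : ℚ≥0) = f x 0)
    (hFsucc : ∀ (x : E) (i : Fin N), (F x i.succ : ℚ≥0) =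
      (D i (fun j => f x (Fin.castLE (Nat.le_succ_of_le i.isLt) j)) : ℚ≥0) * f x i.succ) :
    ∀ x y : E, toLex (f x) ≤ toLex (f y) ↔ toLex (F x) ≤ toLex (F y) := by
  have hF : ∀ x, Nat.cast ∘ F x = clearDenominators D (f x) := fun x => by
    funext i
    cases i using Fin.cases with
    | zero => exact hF0 x
    | succ i => exact hFsucc x i
  intro x y
  rw [← Pi.Lex.comp_le_comp_iff (Nat.strictMono_cast (α := ℚ≥0)), hF, hF, clearDenominators_le_iff D hDpos]

/-- **Paper's Fact III.b.** If `f : E → (ℚ≥0)^(N+1)` has self-bounding denominators,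
witnessed by positive-integer-valued, lexicographically increasing functions `D i`, and
`F : E → (ℤ≥0)^(N+1)` is obtained from `f` by keeping the first component and multiplying the
`(i+1)`-th component by `D i` applied to the first `i` components, then `f` and `F` induce the
same lexicographic comparison on `E`. -/
theorem fact_III_b (N : ℕ) (E : Type*) (f : E → Fin (N + 1) → ℚ≥0)
    -- (i) the first projection of `f` is integer valued
    (hf0 : ∀ x : E, ∃ n : ℕ, f x 0 = (n : ℚ≥0))
    -- (ii) the self-bounding witnesses `D i : (ℚ≥0)^(i+1) → ℤ>0` for `i+1 = 1, …, N`
    (D : (i : Fin N) → (Fin (i.1 + 1) → ℚ≥0) → ℕ)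
    (hDpos : ∀ (i : Fin N) (v : Fin (i.1 + 1) → ℚ≥0), 0 < D i v)
    (hDmono : ∀ (i : Fin N) (v w : Fin (i.1 + 1) → ℚ≥0),
      toLex v ≤ toLex w → D i v ≤ D i w)
    (hDint : ∀ (x : E) (i : Fin N), ∃ n : ℕ,
      (D i (fun j => f x (Fin.castLE (Nat.le_succ_of_le i.isLt) j)) : ℚ≥0) * f x i.succ
        = (n : ℚ≥0))
    -- the function `F : E → (ℤ≥0)^(N+1)`
    (F : E → Fin (N + 1) → ℕ)
    (hF0 : ∀ x : E, (F x 0 : ℚ≥0) = f x 0)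
    (hFsucc : ∀ (x : E) (i : Fin N), (F x i.succ : ℚ≥0) =
      (D i (fun j => f x (Fin.castLE (Nat.le_succ_of_le i.isLt) j)) : ℚ≥0) * f x i.succ) :
    ∀ x y : E, toLex (f x) ≤ toLex (f y) ↔ toLex (F x) ≤ toLex (F y) :=
  fact_III_b_general N E f D hDpos F hF0 hFsucc
end

section
/- Let s ≥ 1, let g_0, …, g_{s−1} be positive rational numbers, let d be a positive integer, and set W := g_0·d. Define Θ to be the set of rational numbers H > 1 for which there exist nonnegative integers α_0, …, α_{s−1} and β with g_0·α_0 + ⋯ + g_{s−1}·α_{s−1} < W and H·(g_0·α_0 + ⋯ + g_{s−1}·α_{s−1}) + β = H·W. Let h, H be rationals with 1 ≤ h < H such that no element of Θ lies in the open interval (h, H). Suppose further that for some index 0 ≤ i ≤ s−1 there are nonnegative integers e_0, …, e_i with e_i ≥ 1 satisfying g_0·e_0 + ⋯ + g_{i−1}·e_{i−1} + g_i·(e_i − 1) = W − g_i. Then for all nonnegative integers α_0, …, α_{s−1} and β: if h·(g_0·α_0 + ⋯ + g_{s−1}·α_{s−1}) + β > h·g_i, then H·(g_0·α_0 + ⋯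 + g_{s−1}·α_{s−1}) + β ≥ H·g_i. (Paper's Claim III.o, the key step proving that the filtration F^•(H) is independent of choices, Lemma III.n.) -/
/-- **Paper's Claim III.o** (the key step in Lemma III.n showing the filtration `F^•(H)` is
independent of choices). With weights `g 0, …, g (s-1) > 0`, `W = g 0 * d`, `Θ` the set of
sub-inductive parameters, `h` the predecessor of `H` in `Θ`, and an index `i` admitting
nonnegative integers `e 0, …, e i` with `e i ≥ 1` and
`g 0 * e 0 + ⋯ + g (i-1) * e (i-1) + g i * (e i - 1) = W - g i`, every monomial datum
`(α, β)` with `h * (∑ g j * α j) + β > h * g i` satisfies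
`H * (∑ g j * α j) + β ≥ H * g i`. -/
theorem claim_III_o (s : ℕ) (hs : 1 ≤ s) (g : Fin s → ℚ) (hg : ∀ i, 0 < g i)
    (d : ℕ) (hd : 0 < d) (W : ℚ) (hW : W = g ⟨0, hs⟩ * (d : ℚ))
    (Θ : Set ℚ)
    (hΘ : Θ = {H : ℚ | 1 < H ∧ ∃ (α : Fin s → ℕ) (β : ℕ),
      (∑ i, g i * (α i : ℚ)) < W ∧
      H * (∑ i, g i * (α i : ℚ)) + (β : ℚ) = H * W})
    (h H : ℚ) (hh1 : 1 ≤ h) (hhH : h < H)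
    (hpred : ∀ θ ∈ Θ, ¬(h < θ ∧ θ < H))
    (i : Fin s) (e : Fin s → ℕ) (hei : 1 ≤ e i)
    (hsum : (∑ j ∈ Finset.univ.filter (fun j => j < i), g j * (e j : ℚ))
        + g i * ((e i : ℚ) - 1) = W - g i) :
    ∀ (α : Fin s → ℕ) (β : ℕ),
      h * (∑ j, g j * (α j : ℚ)) + (β : ℚ) > h * g i →
      H * (∑ j, g j * (α j : ℚ)) + (β : ℚ) ≥ H * g i := by

  intro α β hlt
  by_contra hnot
  push_neg at hnot
  set A := ∑ j, g j * (α j : ℚ) with hAdef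
  have hH0 : (0:ℚ) < H := lt_of_lt_of_le one_pos (le_of_lt (lt_of_le_of_lt hh1 hhH))
  have hβ0 : (0:ℚ) ≤ (β:ℚ) := Nat.cast_nonneg β
  have hA : A < g i := by
    have : H * A < H * g i := by linarith
    exact lt_of_mul_lt_mul_left this (le_of_lt hH0)
  have hden : (0:ℚ) < g i - A := by linarith
  set θ := (β:ℚ) / (g i - A) with hθdef
  have hθh : h < θ := by
    rw [hθdef, lt_div_iff₀ hden]
    nlinarith
  have hθH : θ < H := by
    rw [hθdef, div_lt_iff₀ hden]
    nlinarith
  have hθ1 : 1 < θ := lt_of_le_of_lt hh1 hθh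
  -- auxiliary exponents
  set e' : Fin s → ℕ := fun j => if j < i then e j else if j = i then e i - 1 else 0 with he'
  have hesum : (∑ j, g j * (e' j : ℚ)) = W - g i := by
    rw [← Finset.sum_filter_add_sum_filter_not Finset.univ (fun j => j < i)]
    have h1 : ∑ j ∈ Finset.univ.filter (fun j => j < i), g j * (e' j : ℚ)
        = ∑ j ∈ Finset.univ.filter (fun j => j < i), g j * (e j : ℚ) := by
      refine Finset.sum_congr rfl fun j hj => ?_
      simp only [Finset.mem_filter] at hj
      simp [he', hj.2]
    have h2 : ∑ j ∈ Finset.univ.filter (fun j => ¬ j < i), g j * (e' j : ℚ)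
        = g i * ((e i : ℚ) - 1) := by
      rw [Finset.sum_eq_single i]
      · simp only [he', lt_irrefl, if_false, if_pos rfl, if_true]
        rw [Nat.cast_sub hei]
        norm_num
      · intro j hj hji
        simp only [Finset.mem_filter] at hj
        simp [he', hj.2, hji]
      · intro hi
        simp at hi
    rw [h1, h2, hsum]
  have hθmem : θ ∈ Θ := by
    rw [hΘ]
    refine ⟨hθ1, fun j => α j + e' j, β, ?_, ?_⟩
    · have : (∑ j, g j * ((α j + e' j : ℕ) : ℚ)) = A + (W - g i) := by
        rw [hAdef, ← hesum, ← Finset.sum_add_distrib]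
        refine Finset.sum_congr rfl fun j _ => ?_
        push_cast
        ring
      rw [this]
      linarith
    · have hA' : (∑ j, g j * ((α j + e' j : ℕ) : ℚ)) = A + (W - g i) := by
        rw [hAdef, ← hesum, ← Finset.sum_add_distrib]
        refine Finset.sum_congr rfl fun j _ => ?_
        push_cast
        ring
      have hcancel : θ * (g i - A) = (β:ℚ) := by
        rw [hθdef]
        field_simp
      rw [hA']
      linear_combination -hcancel
  exact hpred θ hθmem ⟨hθh, hθH⟩
end

section
/- Let A be a commutative Noetherian ring, let Γ be a linearly ordered set, and let f : Spec A → Γ be a function on the prime spectrum of A with its Zariski topology. Suppose: (i) for all points y and all x in the closure of {y}, f(x) ≥ f(y); and (ii) for every y, the set {x ∈ closure{y} : f(x) ≤ f(y)} contains a nonempty open subset of the irreducible closed set closure{y}. Then f is upper semicontinuous: for every γ ∈ Γ the set {x ∈ Spec A : f(x) ≥ γ} is Zariski-closed. (Paper's Claim VI.k, Dade's criterion for upper semicontinuity.) -/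
/-!
Noetherian induction on closed sets: it suffices that `S ∩ Z` is closed for every closed `Z`,
and as `Z` is a finite union of irreducible closed sets we may take `Z` irreducible, with
generic point `y`. If `γ ≤ f y`, specialization gives `Z ⊆ {γ ≤ f}`. Otherwise the open set
`U` of (ii) shows that `{γ ≤ f} ∩ Z` lies in the proper closed subset `Z \ U`, and the
induction hypothesis applies there.
-/

open TopologicalSpace

namespace TopologicalSpace.NoetherianSpace

variable {X : Type*} [TopologicalSpace X] [NoetherianSpace X]

theorem isClosed_of_forall_isIrreducible_closeds {S : Set X}
    (hS : ∀ Z : Closeds X, IsIrreducible (Z : Set X) → ¬(Z : Set X) ⊆ S →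
      ∃ W : Closeds X, W < Z ∧ S ∩ Z ⊆ W) :
    IsClosed S := by
  suffices ∀ Z : Closeds X, IsClosed (S ∩ Z) by simpa using this ⊤
  intro Z
  induction Z using WellFoundedLT.induction with
  | _ Z IH =>
  obtain ⟨T, hT, rfl⟩ := exists_finset_irreducible Z
  rw [Closeds.coe_finset_sup, Finset.sup_set_eq_biUnion, Function.comp_id, Set.inter_iUnion₂]
  refine isClosed_biUnion_finset fun t ht => ?_
  by_cases htS : (t : Set X) ⊆ S
  · rw [Set.inter_eq_right.mpr htS]
    exact t.isClosed
  · obtain ⟨W, hWt, hSW⟩ := hS t (hT ⟨t, ht⟩) htS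
    have hW : S ∩ t = S ∩ W :=
      subset_antisymm (Set.subset_inter Set.inter_subset_left hSW)
        (Set.inter_subset_inter_right S hWt.le)
    rw [hW]
    exact IH W (hWt.trans_le (Finset.le_sup (f := id) ht))

theorem isClosed_setOf_le_apply [QuasiSober X] {Γ : Type*} [LinearOrder Γ] {f : X → Γ}
    (h_specializes : ∀ y x : X, x ∈ closure ({y} : Set X) → f y ≤ f x)
    (h_generic : ∀ y : X, ∃ U : Set X, IsOpen U ∧ (closure ({y} : Set X) ∩ U).Nonempty ∧
      ∀ x ∈ closure ({y} : Set X) ∩ U, f x ≤ f y)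
    (γ : Γ) : IsClosed {x : X | γ ≤ f x} := by
  refine isClosed_of_forall_isIrreducible_closeds fun Z hZ hZS => ?_
  obtain ⟨y, hy⟩ := QuasiSober.sober hZ Z.isClosed
  have hfy : f y < γ :=
    lt_of_not_ge fun hγ => hZS fun x hx => hγ.trans (h_specializes y x (hy.symm ▸ hx))
  obtain ⟨U, hU, hZU, hfU⟩ := h_generic y
  rw [hy.def] at hZU hfU
  refine ⟨Z ⊓ ⟨Uᶜ, hU.isClosed_compl⟩, inf_lt_left.mpr fun hZU' => ?_,
    fun x ⟨hγx, hxZ⟩ => ⟨hxZ, fun hxU => ?_⟩⟩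
  · obtain ⟨x, hxZ, hxU⟩ := hZU
    exact hZU' hxZ hxU
  · exact ((hfU x ⟨hxZ, hxU⟩).trans_lt hfy).not_ge hγx

end TopologicalSpace.NoetherianSpace

/-- **Paper's Claim VI.k** (Dade's criterion for upper semicontinuity). Let `A` be a
commutative Noetherian ring, `Γ` a linear order and `f : Spec A → Γ`. If (i) `f` increases
under specialization, and (ii) for every point `y` the locus `{x ∈ closure {y} | f x ≤ f y}`
contains a nonempty open subset of the irreducible closed set `closure {y}`, then `f` is
upper semicontinuous: every superlevel set `{f ≥ γ}` is Zariski-closed. -/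
theorem claim_VI_k (A : Type*) [CommRing A] [IsNoetherianRing A]
    (Γ : Type*) [LinearOrder Γ] (f : PrimeSpectrum A → Γ)
    (h1 : ∀ y x : PrimeSpectrum A, x ∈ closure ({y} : Set (PrimeSpectrum A)) → f y ≤ f x)
    (h2 : ∀ y : PrimeSpectrum A, ∃ U : Set (PrimeSpectrum A), IsOpen U ∧
      (closure ({y} : Set (PrimeSpectrum A)) ∩ U).Nonempty ∧
      ∀ x ∈ closure ({y} : Set (PrimeSpectrum A)) ∩ U, f x ≤ f y) :
    ∀ γ : Γ, IsClosed {x : PrimeSpectrum A | γ ≤ f x} :=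
  NoetherianSpace.isClosed_setOf_le_apply h1 h2
end

section
/- Let k be a commutative Noetherian ring, m ≥ 1, let A := k[[x_1, …, x_m]] be the formal power series ring in m variables over k (MvPowerSeries over Fin m), let M ⊆ A be the ideal generated by x_1, …, x_m, and let I ⊆ A be an ideal. For a prime p of k with residue field κ(p), let I_p be the ideal of κ(p)[[x_1, …, x_m]] generated by the image of I under the coefficientwise ring map k → κ(p), and let M_p be the ideal generated by the variables. Define d_p(I) ∈ ℕ ∪ {∞} as the supremum of those α ∈ ℕ with I_p ⊆ (M_p)^α (so d_p(I) = ∞ when I_p = 0). Then the function p ↦ d_p(I) is upper semicontinuous on Spec k: for every α ∈ ℕ ∪ {∞}, the set {p : d_p(I) ≥ α} is Zariski-closed. (Paper's Fact V.b: upper semicontinuity of the multiplicity.) -/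
/-- The residue field of a commutative ring at a point of its prime spectrum. -/
noncomputable abbrev ResidueFieldAt {k : Type*} [CommRing k] (p : PrimeSpectrum k) : Type _ :=
  IsLocalRing.ResidueField (Localization.AtPrime p.asIdeal)

/-- The canonical map from a ring to its residue field at a prime. -/
noncomputable def residueMapAt {k : Type*} [CommRing k] (p : PrimeSpectrum k) :
    k →+* ResidueFieldAt p :=
  (IsLocalRing.residue (Localization.AtPrime p.asIdeal)).comp
    (algebraMap k (Localization.AtPrime p.asIdeal))

/-!
For a finite set of variables, `f ∈ (x₁, …, x_m)ⁿ` exactly when all coefficients of `f` in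
total degree `< n` vanish. Hence `α ≤ d_p(I)` says that every coefficient of total degree `< α`
of every element of `I` lies in `p`, so `{p | α ≤ d_p(I)}` is the zero locus of the set of these
coefficients; for `α = ∞` it is the intersection of these closed sets over all finite `α`.
-/

namespace MvPowerSeries

variable {σ R : Type*} [CommRing R]

theorem natCast_le_order_iff {f : MvPowerSeries σ R} {n : ℕ} :
    (n : ℕ∞) ≤ f.order ↔ ∀ e : σ →₀ ℕ, e.degree < n → coeff e f = 0 :=
  ⟨fun h _ he => coeff_of_lt_order (lt_of_lt_of_le (by exact_mod_cast he) h), nat_le_order⟩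

theorem constantCoeff_eq_zero_of_mem_span_X {f : MvPowerSeries σ R}
    (hf : f ∈ Ideal.span (Set.range (X : σ → MvPowerSeries σ R))) : constantCoeff f = 0 := by
  have hle : Ideal.span (Set.range (X : σ → MvPowerSeries σ R)) ≤ RingHom.ker constantCoeff :=
    Ideal.span_le.2 <| by rintro _ ⟨i, rfl⟩; simp
  exact hle hf

theorem le_order_of_mem_span_X_pow {n : ℕ} {f : MvPowerSeries σ R}
    (hf : f ∈ Ideal.span (Set.range (X : σ → MvPowerSeries σ R)) ^ n) : (n : ℕ∞) ≤ f.order := by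
  induction n generalizing f with
  | zero => simp
  | succ n ih =>
    rw [pow_succ'] at hf
    refine Submodule.mul_induction_on hf (fun g hg h hh => ?_) (fun g h hg hh => ?_)
    · calc ((n + 1 : ℕ) : ℕ∞) = 1 + n := by push_cast; ring
        _ ≤ g.order + h.order := add_le_add
            ((one_le_order_iff_constCoeff_eq_zero).2 (constantCoeff_eq_zero_of_mem_span_X hg))
            (ih hh)
        _ ≤ (g * h).order := le_order_mul
    · exact (le_min hg hh).trans min_order_le_add

/-- Each exponent `d ≠ 0` is attributed to the least variable occurring in it, for an auxiliary
well-order on `σ`. -/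
theorem exists_eq_sum_X_mul_of_le_order [Fintype σ] {n : ℕ} {f : MvPowerSeries σ R}
    (hf : ((n + 1 : ℕ) : ℕ∞) ≤ f.order) :
    ∃ g : σ → MvPowerSeries σ R, (∀ i, (n : ℕ∞) ≤ (g i).order) ∧ f = ∑ i, X i * g i := by
  classical
  let : LinearOrder σ := WellOrderingRel.isWellOrder.linearOrder
  have hcoeff := natCast_le_order_iff.1 hf
  let g : σ → MvPowerSeries σ R := fun i e =>
    if (e + Finsupp.single i 1).support.min = (i : WithTop σ) then
      coeff (e + Finsupp.single i 1) f
    else 0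
  have hterm : ∀ (i : σ) (d : σ →₀ ℕ),
      coeff d (X i * g i) = if d.support.min = (i : WithTop σ) then coeff d f else 0 := by
    intro i d
    rw [X, coeff_monomial_mul, one_mul]
    by_cases hid : Finsupp.single i 1 ≤ d
    · rw [if_pos hid, coeff_apply]
      simp only [g, tsub_add_cancel_of_le hid]
    · have hmin : d.support.min ≠ (i : WithTop σ) := fun h =>
        hid (Finsupp.single_le_iff.2 (Nat.one_le_iff_ne_zero.2
          (Finsupp.mem_support_iff.1 (Finset.mem_of_min h))))
      rw [if_neg hid, if_neg hmin]
  refine ⟨g, fun i => natCast_le_order_iff.2 fun e he => ?_, ?_⟩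
  · rw [coeff_apply]
    refine ite_eq_right_iff.2 fun _ => hcoeff _ ?_
    rw [map_add, Finsupp.degree_single]
    omega
  · ext d
    simp only [map_sum, hterm]
    cases hmin : d.support.min with
    | top =>
      have hd : d = 0 := Finsupp.support_eq_empty.1 (Finset.min_eq_top.1 hmin)
      simp [hd, hcoeff 0 (by simp)]
    | coe j => simp [Finset.sum_ite_eq]

theorem mem_span_X_pow_of_le_order [Finite σ] {n : ℕ} {f : MvPowerSeries σ R}
    (hf : (n : ℕ∞) ≤ f.order) : f ∈ Ideal.span (Set.range (X : σ → MvPowerSeries σ R)) ^ n := by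
  have := Fintype.ofFinite σ
  induction n generalizing f with
  | zero => simp
  | succ n ih =>
    obtain ⟨g, hg, rfl⟩ := exists_eq_sum_X_mul_of_le_order hf
    rw [pow_succ']
    exact Ideal.sum_mem _ fun i _ => Ideal.mul_mem_mul (Ideal.subset_span ⟨i, rfl⟩) (ih (hg i))

theorem mem_span_X_pow_iff_le_order [Finite σ] {n : ℕ} {f : MvPowerSeries σ R} :
    f ∈ Ideal.span (Set.range (X : σ → MvPowerSeries σ R)) ^ n ↔ (n : ℕ∞) ≤ f.order :=
  ⟨le_order_of_mem_span_X_pow, mem_span_X_pow_of_le_order⟩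

theorem map_le_span_X_pow_iff [Finite σ] {S : Type*} [CommRing S] (φ : R →+* S)
    (I : Ideal (MvPowerSeries σ R)) (n : ℕ) :
    I.map (map φ) ≤ Ideal.span (Set.range (X : σ → MvPowerSeries σ S)) ^ n ↔
      ∀ f ∈ I, ∀ e : σ →₀ ℕ, e.degree < n → φ (coeff e f) = 0 := by
  rw [Ideal.map_le_iff_le_comap]
  simp only [SetLike.le_def, Ideal.mem_comap, mem_span_X_pow_iff_le_order, natCast_le_order_iff,
    coeff_map]

end MvPowerSeries

theorem ENat.natCast_le_biSup_natCast_iff {P : ℕ → Prop} (hP : Antitone P) (h0 : P 0) (n : ℕ) :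
    (n : ℕ∞) ≤ ⨆ (α : ℕ) (_ : P α), (α : ℕ∞) ↔ P n := by
  refine ⟨fun h => ?_, fun h => le_iSup₂ (f := fun (α : ℕ) (_ : P α) => (α : ℕ∞)) n h⟩
  by_contra hn
  have hpos : n ≠ 0 := by rintro rfl; exact hn h0
  have hle : ⨆ (α : ℕ) (_ : P α), (α : ℕ∞) ≤ (n - 1 : ℕ) := iSup₂_le fun α hα => by
    have : α < n := lt_of_not_ge fun hnα => hn (hP hnα hα)
    exact_mod_cast Nat.le_sub_one_of_lt this
  have := h.trans hle
  norm_cast at this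
  omega

theorem ENat.isClosed_setOf_le_of_forall_natCast {X : Type*} [TopologicalSpace X] {f : X → ℕ∞}
    (h : ∀ n : ℕ, IsClosed {x | (n : ℕ∞) ≤ f x}) (α : ℕ∞) : IsClosed {x | α ≤ f x} := by
  have hset : {x | α ≤ f x} = ⋂ (n : ℕ) (_ : (n : ℕ∞) ≤ α), {x | (n : ℕ∞) ≤ f x} := by
    ext x
    simp only [Set.mem_ofPred_eq, Set.mem_iInter, ENat.forall_natCast_le_iff_le]
  rw [hset]
  exact isClosed_iInter fun n => isClosed_iInter fun _ => h n

theorem ker_residueMapAt {k : Type*} [CommRing k] (p : PrimeSpectrum k) :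
    RingHom.ker (residueMapAt p) = p.asIdeal := by
  ext x
  rw [RingHom.mem_ker, residueMapAt, RingHom.comp_apply, IsLocalRing.residue_eq_zero_iff,
    ← Ideal.mem_comap, ← Ideal.under_def, Localization.AtPrime.under_maximalIdeal]

theorem fact_V_b_general (k : Type*) [CommRing k]
    (m : ℕ)
    (I : Ideal (MvPowerSeries (Fin m) k))
    (d : PrimeSpectrum k → ℕ∞)
    (hd : ∀ p : PrimeSpectrum k,
      d p = ⨆ (α : ℕ) (_ : Ideal.map (MvPowerSeries.map (σ := Fin m) (residueMapAt p)) I ≤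
        (Ideal.span (Set.range (MvPowerSeries.X :
          Fin m → MvPowerSeries (Fin m) (ResidueFieldAt p)))) ^ α), (α : ℕ∞)) :
    ∀ α : ℕ∞, IsClosed {p : PrimeSpectrum k | α ≤ d p} := by
  refine ENat.isClosed_setOf_le_of_forall_natCast fun n => ?_
  have hlevel : {p : PrimeSpectrum k | (n : ℕ∞) ≤ d p} = PrimeSpectrum.zeroLocus
      {x | ∃ f ∈ I, ∃ e : Fin m →₀ ℕ, e.degree < n ∧ MvPowerSeries.coeff e f = x} := by
    ext p
    rw [Set.mem_ofPred_eq, hd p, ENat.natCast_le_biSup_natCast_iff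
      (fun _ _ hab hb => hb.trans (Ideal.pow_le_pow_right hab)) (by simp),
      MvPowerSeries.map_le_span_X_pow_iff]
    simp only [← RingHom.mem_ker, ker_residueMapAt, PrimeSpectrum.mem_zeroLocus, Set.subset_def,
      Set.mem_ofPred_eq, SetLike.mem_coe]
    exact ⟨fun h _ ⟨f, hf, e, he, hx⟩ => hx ▸ h f hf e he,
      fun h f hf e he => h _ ⟨f, hf, e, he, rfl⟩⟩
  exact hlevel ▸ PrimeSpectrum.isClosed_zeroLocus _

/-- **Paper's Fact V.b**: upper semicontinuity of the multiplicity. Let `k` be a Noetherian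
commutative ring, `A = k[[x₁,…,x_m]]`, `M` the ideal of the variables, and `I ⊆ A` an ideal.
For a prime `p` of `k` let `d p ∈ ℕ∞` be the supremum of those `α` with `I_p ⊆ M_p ^ α` in
`κ(p)[[x₁,…,x_m]]` (so `d p = ∞` when `I_p = 0`). Then `p ↦ d p` is upper semicontinuous on
`Spec k`. -/
theorem fact_V_b (k : Type*) [CommRing k] [IsNoetherianRing k]
    (m : ℕ) (hm : 1 ≤ m)
    (I : Ideal (MvPowerSeries (Fin m) k))
    (d : PrimeSpectrum k → ℕ∞)
    (hd : ∀ p : PrimeSpectrum k,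
      d p = ⨆ (α : ℕ) (_ : Ideal.map (MvPowerSeries.map (σ := Fin m) (residueMapAt p)) I ≤
        (Ideal.span (Set.range (MvPowerSeries.X :
          Fin m → MvPowerSeries (Fin m) (ResidueFieldAt p)))) ^ α), (α : ℕ∞)) :
    ∀ α : ℕ∞, IsClosed {p : PrimeSpectrum k | α ≤ d p} :=
  fact_V_b_general k m I d hd
end

section
/- Let k be a commutative Noetherian ring of characteristic zero, let w_1, …, w_m be positive integers (weights, assigning weighted degree Σ w_i e_i to the monomial x^e), let D be a positive integer, and let V be a k-submodule of the weighted-homogeneous degree-D part of k[x_1, …, x_m]. For a prime p of k with residue field κ(p), let V_p be the κ(p)-span of the image of V in κ(p)[x_1, …, x_m]. Define λ(p) to be the κ(p)-dimension of the space of κ(p)-linear derivations ∂ of κ(p)[x_1, …, x_m] such that, for every j, ∂(x_j) is a κ(p)-linear combination of monomials of weighted degree strictly less than w_j, and ∂(f) = 0 for every f ∈ V_p. Then p ↦ λ(p) is upper semicontinuous on Spec k: for every integer ℓ, the set {p : λ(p) ≥ ℓ} is Zariski-closed. (Paper's Fact V.i: upper semicontinuity of the dimension of the space of negative-weight vector fields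 annihilating V.) -/
open MvPolynomial Module Matrix Submodule

section Minors

variable {K R I : Type*} [Field K]

theorem exists_linearIndependent_comp_fin {W ι : Type*} [AddCommGroup W] [Module K W]
    (v : ι → W) {n : ℕ} (hn : n ≤ finrank K (span K (Set.range v))) :
    ∃ t : Fin n → ι, LinearIndependent K (v ∘ t) := by
  obtain ⟨κ, a, -, hspan, hli⟩ := exists_linearIndependent' K v
  obtain ⟨e⟩ : Nonempty (Fin n ↪ κ) := by
    cases finite_or_infinite κ
    · have := Fintype.ofFinite κ
      rw [← hspan, finrank_span_eq_card hli] at hn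
      exact Function.Embedding.nonempty_of_card_le (by simpa using hn)
    · exact ⟨Fin.valEmbedding.trans (Infinite.natEmbedding κ)⟩
  exact ⟨a ∘ e, hli.comp e e.injective⟩

theorem Matrix.span_row_eq_top_of_linearIndependent_col [Fintype I] {B : Matrix R I K}
    (hB : LinearIndependent K B.col) : span K (Set.range B.row) = ⊤ := by
  classical
  by_contra hne
  obtain ⟨f, hf0, hf⟩ :=
    exists_dual_map_eq_bot_of_lt_top (lt_top_iff_ne_top.2 hne) inferInstance
  obtain ⟨v, rfl⟩ := (dotProductEquiv K I).surjective f
  have hv : B *ᵥ v = 0 := funext fun ρ => by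
    have hρ : B.row ρ ∈ span K (Set.range B.row) := subset_span ⟨ρ, rfl⟩
    have := mem_map_of_mem (f := dotProductEquiv K I v) hρ
    rw [hf, mem_bot, dotProductEquiv_apply_apply, dotProduct_comm] at this
    exact this
  exact hf0 (by rw [mulVec_injective_iff.2 hB (hv.trans (mulVec_zero B).symm), map_zero])

theorem Matrix.rank_le_iff_forall_det_submatrix_eq_zero [Fintype I] (A : Matrix R I K) (r : ℕ) :
    A.rank ≤ r ↔ ∀ (s : Fin (r + 1) → R) (t : Fin (r + 1) → I), (A.submatrix s t).det = 0 := by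
  constructor
  · intro h s t
    by_contra hdet
    have := A.rank_submatrix_le s t
    rw [rank_of_det_ne_zero hdet, Fintype.card_fin] at this
    omega
  · intro h
    by_contra! hr
    obtain ⟨t, ht⟩ := exists_linearIndependent_comp_fin A.col (n := r + 1)
      (by rwa [← rank_eq_finrank_span_cols])
    have hrows := span_row_eq_top_of_linearIndependent_col (B := A.submatrix id t) ht
    obtain ⟨s, hs⟩ := exists_linearIndependent_comp_fin (A.submatrix id t).row (n := r + 1)
      (by rw [hrows, finrank_top, finrank_fin_fun])
    exact ((isUnit_iff_isUnit_det _).1 (linearIndependent_rows_iff_isUnit.1 hs)).ne_zero (h s t)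

end Minors

section Semicontinuity

variable {k R I : Type*} [CommRing k] [Fintype I]

theorem residueMapAt_eq_zero_iff (p : PrimeSpectrum k) (x : k) :
    residueMapAt p x = 0 ↔ x ∈ p.asIdeal := by
  rw [residueMapAt, RingHom.comp_apply, IsLocalRing.residue_eq_zero_iff]
  exact IsLocalization.AtPrime.to_map_mem_maximal_iff _ p.asIdeal x

theorem isClosed_setOf_rank_map_residueMapAt_le (M : Matrix R I k) (r : ℕ) :
    IsClosed {p : PrimeSpectrum k | (M.map (residueMapAt p)).rank ≤ r} := by
  classical
  convert PrimeSpectrum.isClosed_zeroLocus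
    (Set.range fun st : (Fin (r + 1) → R) × (Fin (r + 1) → I) => (M.submatrix st.1 st.2).det)
  ext p
  simp only [Set.mem_ofPred_eq, rank_le_iff_forall_det_submatrix_eq_zero, submatrix_map,
    ← RingHom.mapMatrix_apply, ← RingHom.map_det, residueMapAt_eq_zero_iff,
    PrimeSpectrum.mem_zeroLocus, Set.range_subset_iff, Prod.forall, SetLike.mem_coe]

theorem isClosed_setOf_le_finrank_ker_map_residueMapAt (M : Matrix R I k) (ℓ : ℕ) :
    IsClosed {p : PrimeSpectrum k |
      ℓ ≤ finrank (ResidueFieldAt p) (LinearMap.ker (M.map (residueMapAt p)).mulVecLin)} := by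
  have rank_add_finrank_ker (p : PrimeSpectrum k) :
      (M.map (residueMapAt p)).rank +
        finrank (ResidueFieldAt p) (LinearMap.ker (M.map (residueMapAt p)).mulVecLin) =
      Fintype.card I := by
    rw [rank, LinearMap.finrank_range_add_finrank_ker, finrank_fintype_fun_eq_card]
  by_cases hℓ : ℓ ≤ Fintype.card I
  · convert isClosed_setOf_rank_map_residueMapAt_le M (Fintype.card I - ℓ) using 1
    ext p
    have := rank_add_finrank_ker p
    simp only [Set.mem_ofPred_eq]
    omega
  · convert isClosed_empty
    refine Set.eq_empty_of_forall_notMem fun p hp => ?_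
    have := rank_add_finrank_ker p
    simp only [Set.mem_ofPred_eq] at hp
    omega

end Semicontinuity

section LowMonomials

variable {σ : Type*} [Fintype σ] (w : σ → ℕ) (hw : ∀ j, w j ≠ 0)

noncomputable def lowMonomials (j : σ) : Finset (σ →₀ ℕ) :=
  (Finsupp.finite_of_nat_weight_lt w hw (w j)).toFinset

abbrev LowMonomialIndex : Type _ := Σ j : σ, lowMonomials w hw j

variable {w hw}

theorem mem_lowMonomials {j : σ} {μ : σ →₀ ℕ} :
    μ ∈ lowMonomials w hw j ↔ Finsupp.weight w μ < w j :=
  Set.Finite.mem_toFinset _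

variable (hw) in
theorem weightedTotalDegree_lt_iff_support_subset {R : Type*} [CommSemiring R]
    (p : MvPolynomial σ R) (j : σ) :
    weightedTotalDegree w p < w j ↔ p.support ⊆ lowMonomials w hw j := by
  rw [weightedTotalDegree, Finset.sup_lt_iff (Nat.pos_of_ne_zero (hw j))]
  simp only [Finset.subset_iff, mem_lowMonomials]

end LowMonomials

section MonomialDerivation

variable {σ R S : Type*} [CommRing R] [CommRing S]

theorem map_mkDerivation (φ : R →+* S) (g : σ → MvPolynomial σ R) (f : MvPolynomial σ R) :
    map φ (mkDerivation R g f) = mkDerivation S (fun j => map φ (g j)) (map φ f) := by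
  induction f using MvPolynomial.induction_on with
  | C a => simp
  | add f g hf hg => simp [hf, hg]
  | mul_X f i hf => simp [Derivation.leibniz, hf]

variable [DecidableEq σ]

noncomputable def monomialDerivation (R : Type*) [CommSemiring R] (j : σ) (μ : σ →₀ ℕ) :
    Derivation R (MvPolynomial σ R) (MvPolynomial σ R) :=
  mkDerivation R (Pi.single j (monomial μ 1))

theorem map_monomialDerivation (φ : R →+* S) (j : σ) (μ : σ →₀ ℕ) (f : MvPolynomial σ R) :
    map φ (monomialDerivation R j μ f) = monomialDerivation S j μ (map φ f) := by
  rw [monomialDerivation, map_mkDerivation]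
  congr 2
  ext1 i
  rcases eq_or_ne i j with rfl | hij
  · simp
  · simp [Pi.single_eq_of_ne hij]

end MonomialDerivation

section LowDerivation

variable {σ : Type*} [Fintype σ] [DecidableEq σ] (w : σ → ℕ) (hw : ∀ j, w j ≠ 0)
  (R : Type*) [CommRing R]

noncomputable def lowDerivation :
    (LowMonomialIndex w hw → R) →ₗ[R] Derivation R (MvPolynomial σ R) (MvPolynomial σ R) :=
  Fintype.linearCombination R fun x => monomialDerivation R x.1 x.2

variable {w hw R}

theorem lowDerivation_apply (c : LowMonomialIndex w hw → R) (f : MvPolynomial σ R) :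
    lowDerivation w hw R c f = ∑ x, c x • monomialDerivation R x.1 x.2 f := by
  rw [lowDerivation, Fintype.linearCombination_apply]
  change Derivation.coeFnAddMonoidHom _ f = _
  rw [map_sum, Finset.sum_apply]
  rfl

theorem lowDerivation_apply_X (c : LowMonomialIndex w hw → R) (j : σ) :
    lowDerivation w hw R c (X j) = ∑ μ : lowMonomials w hw j, monomial μ (c ⟨j, μ⟩) := by
  simp [lowDerivation_apply, Fintype.sum_sigma, monomialDerivation, Pi.single_apply, smul_monomial]

theorem coeff_lowDerivation_X (c : LowMonomialIndex w hw → R) (x : LowMonomialIndex w hw) :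
    coeff (x.2 : σ →₀ ℕ) (lowDerivation w hw R c (X x.1)) = c x := by
  obtain ⟨j, μ⟩ := x
  simp [lowDerivation_apply_X, coeff_sum, coeff_monomial]

theorem lowDerivation_injective : Function.Injective (lowDerivation w hw R) :=
  fun c c' h => funext fun x => by rw [← coeff_lowDerivation_X c x, h, coeff_lowDerivation_X]

theorem mem_range_lowDerivation_iff (d : Derivation R (MvPolynomial σ R) (MvPolynomial σ R)) :
    d ∈ LinearMap.range (lowDerivation w hw R) ↔
      ∀ j, (d (X j)).support ⊆ lowMonomials w hw j := by
  constructor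
  · rintro ⟨c, rfl⟩ j
    rw [lowDerivation_apply_X]
    refine support_sum.trans (Finset.biUnion_subset.2 fun μ _ => ?_)
    exact support_monomial_subset.trans (Finset.singleton_subset_iff.2 μ.2)
  · intro h
    refine ⟨fun x => coeff x.2 (d (X x.1)), derivation_ext fun j => ?_⟩
    rw [lowDerivation_apply_X,
      Finset.sum_coe_sort (lowMonomials w hw j) fun μ => monomial μ (coeff μ (d (X j))),
      ← Finset.sum_subset (h j) fun μ _ hμ => by rw [notMem_support_iff.1 hμ, monomial_zero]]
    exact support_sum_monomial_coeff _

end LowDerivation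

section DerivationMatrix

variable {σ : Type*} [Fintype σ] [DecidableEq σ] {w : σ → ℕ} (hw : ∀ j, w j ≠ 0)
  {k R : Type*} [CommRing k] [CommRing R]

noncomputable def derivationMatrix (V : Set (MvPolynomial σ k)) :
    Matrix (V × (σ →₀ ℕ)) (LowMonomialIndex w hw) k :=
  Matrix.of fun r x => coeff r.2 (monomialDerivation k x.1 x.2 r.1)

variable {hw}

theorem coeff_lowDerivation_map (φ : k →+* R) (V : Set (MvPolynomial σ k))
    (c : LowMonomialIndex w hw → R) (f : V) (τ : σ →₀ ℕ) :
    coeff τ (lowDerivation w hw R c (map φ f)) = ((derivationMatrix hw V).map φ *ᵥ c) (f, τ) := by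
  simp [lowDerivation_apply, ← map_monomialDerivation, coeff_sum, mulVec, dotProduct,
    derivationMatrix, coeff_map, mul_comm]

theorem lowDerivation_vanishes_on_span_iff (φ : k →+* R) (V : Set (MvPolynomial σ k))
    (c : LowMonomialIndex w hw → R) :
    (∀ g ∈ span R (map φ '' V), lowDerivation w hw R c g = 0) ↔
      (derivationMatrix hw V).map φ *ᵥ c = 0 := by
  calc _ ↔ ∀ f ∈ V, lowDerivation w hw R c (map φ f) = 0 := by
        have := span_le (s := map φ '' V) (p := LinearMap.ker (lowDerivation w hw R c).toLinearMap)
        simp only [SetLike.le_def, Set.subset_def, LinearMap.mem_ker, Set.forall_mem_image] at this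
        exact this
    _ ↔ _ := by
        simp only [_root_.funext_iff, Prod.forall, Subtype.forall, ← coeff_lowDerivation_map,
          Pi.zero_apply, MvPolynomial.ext_iff, coeff_zero]

theorem finrank_eq_finrank_ker_derivationMatrix {K : Type*} [Field K] (φ : k →+* K)
    (V : Set (MvPolynomial σ k))
    (L : Submodule K (Derivation K (MvPolynomial σ K) (MvPolynomial σ K)))
    (hL : ∀ d, d ∈ L ↔ (∀ j, weightedTotalDegree w (d (X j)) < w j) ∧
      ∀ f ∈ span K (map φ '' V), d f = 0) :
    finrank K L = finrank K (LinearMap.ker ((derivationMatrix hw V).map φ).mulVecLin) := by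
  have hL' : L = (LinearMap.ker ((derivationMatrix hw V).map φ).mulVecLin).map
      (lowDerivation w hw K) := by
    ext d
    simp only [hL, weightedTotalDegree_lt_iff_support_subset hw, ← mem_range_lowDerivation_iff,
      mem_map, LinearMap.mem_ker, mulVecLin_apply]
    constructor
    · rintro ⟨⟨c, rfl⟩, hc⟩
      exact ⟨c, (lowDerivation_vanishes_on_span_iff φ V c).1 hc, rfl⟩
    · rintro ⟨c, hc, rfl⟩
      exact ⟨⟨c, rfl⟩, (lowDerivation_vanishes_on_span_iff φ V c).2 hc⟩
  rw [hL']
  exact (LinearEquiv.finrank_eq (equivMapOfInjective _ lowDerivation_injective _)).symm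

end DerivationMatrix

theorem fact_V_i_general (k : Type*) [CommRing k] (m : ℕ)
    (w : Fin m → ℕ) (hw : ∀ j, 0 < w j)
    (V : Submodule k (MvPolynomial (Fin m) k))
    (lam : PrimeSpectrum k → ℕ)
    (hlam : ∀ p : PrimeSpectrum k,
      ∃ L : Submodule (ResidueFieldAt p)
          (Derivation (ResidueFieldAt p) (MvPolynomial (Fin m) (ResidueFieldAt p))
            (MvPolynomial (Fin m) (ResidueFieldAt p))),
        (∀ der : Derivation (ResidueFieldAt p) (MvPolynomial (Fin m) (ResidueFieldAt p))
            (MvPolynomial (Fin m) (ResidueFieldAt p)), der ∈ L ↔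
          ((∀ j : Fin m,
              MvPolynomial.weightedTotalDegree w (der (MvPolynomial.X j)) < w j) ∧
            ∀ f ∈ Submodule.span (ResidueFieldAt p)
              ((MvPolynomial.map (residueMapAt p)) '' (V : Set (MvPolynomial (Fin m) k))),
              der f = 0)) ∧
        lam p = Module.finrank (ResidueFieldAt p) L) :
    ∀ ℓ : ℕ, IsClosed {p : PrimeSpectrum k | ℓ ≤ lam p} := by
  intro ℓ
  have hw' : ∀ j, w j ≠ 0 := fun j => (hw j).ne'
  have lam_eq (p : PrimeSpectrum k) : lam p = finrank (ResidueFieldAt p)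
      (LinearMap.ker ((derivationMatrix hw' (V : Set _)).map (residueMapAt p)).mulVecLin) := by
    obtain ⟨L, hL, hlamp⟩ := hlam p
    rw [hlamp, finrank_eq_finrank_ker_derivationMatrix _ _ L hL]
  simpa only [lam_eq] using isClosed_setOf_le_finrank_ker_map_residueMapAt _ ℓ

/-- **Paper's Fact V.i**: upper semicontinuity of the dimension of the space of
negative-weight vector fields annihilating `V`.  Let `k` be a Noetherian commutative ring of
characteristic zero, `w₁,…,w_m` positive integer weights, and `V` a `k`-submodule of the
weighted-homogeneous degree-`D` part of `k[x₁,…,x_m]`.  For a prime `p`, let `λ p` be the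
`κ(p)`-dimension of the space of `κ(p)`-linear derivations `∂` with each `∂ xⱼ` a combination
of monomials of weighted degree `< wⱼ` and `∂ f = 0` for every `f` in the `κ(p)`-span `V_p` of
the image of `V`.  Then `p ↦ λ p` is upper semicontinuous on `Spec k`. -/
theorem fact_V_i (k : Type*) [CommRing k] [IsNoetherianRing k] [CharZero k]
    (m D : ℕ) (hm : 1 ≤ m) (hD : 1 ≤ D)
    (w : Fin m → ℕ) (hw : ∀ j, 0 < w j)
    (V : Submodule k (MvPolynomial (Fin m) k))
    (hV : ∀ f ∈ V, MvPolynomial.IsWeightedHomogeneous w f D)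
    (lam : PrimeSpectrum k → ℕ)
    (hlam : ∀ p : PrimeSpectrum k,
      ∃ L : Submodule (ResidueFieldAt p)
          (Derivation (ResidueFieldAt p) (MvPolynomial (Fin m) (ResidueFieldAt p))
            (MvPolynomial (Fin m) (ResidueFieldAt p))),
        (∀ der : Derivation (ResidueFieldAt p) (MvPolynomial (Fin m) (ResidueFieldAt p))
            (MvPolynomial (Fin m) (ResidueFieldAt p)), der ∈ L ↔
          ((∀ j : Fin m,
              MvPolynomial.weightedTotalDegree w (der (MvPolynomial.X j)) < w j) ∧
            ∀ f ∈ Submodule.span (ResidueFieldAt p)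
              ((MvPolynomial.map (residueMapAt p)) '' (V : Set (MvPolynomial (Fin m) k))),
              der f = 0)) ∧
        lam p = Module.finrank (ResidueFieldAt p) L) :
    ∀ ℓ : ℕ, IsClosed {p : PrimeSpectrum k | ℓ ≤ lam p} :=
  fact_V_i_general k m w hw V lam hlam
end

section
/- Let k be a field of characteristic zero, m ≥ 1 and d ≥ 1, let V be a set of homogeneous polynomials of degree d in k[x_1, …, x_m], and let p = (p_1, …, p_m) ∈ k^m. Suppose every f ∈ V vanishes to order at least d at p, i.e. every iterated partial derivative of f of total order < d vanishes at p (equivalently, the polynomial f(x_1 + p_1, …, x_m + p_m) has no nonzero homogeneous component of degree < d). Then the derivation p_1·∂/∂x_1 + ⋯ + p_m·∂/∂x_m annihilates every f ∈ V (as a polynomial identity). In particular, if the only c ∈ k^m with c_1·∂f/∂x_1 + ⋯ + c_m·∂f/∂x_m = 0 for all f ∈ V is c = 0, then at every nonzero point p ∈ k^m some f ∈ V vanishes to order strictly less than d, i.e. the multiplicity at p of the ideal generated by V is strictly less than d. (Paper's Proposition IV.c, case σ = 0: after blowing up, the multiplicity strictly decreases at every point of the exceptional projective space.) -/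
open MvPolynomial

namespace PropIVc

variable {m : ℕ} {k : Type*} [CommRing k]

lemma degree_eq_sum_univ (s : Fin m →₀ ℕ) : s.degree = ∑ i, s i := by
  classical
  exact Finset.sum_subset (Finset.subset_univ _)
    (fun i _ hi => Finsupp.notMem_support_iff.mp hi)

lemma degree_of_mem_support {n : ℕ} {φ : MvPolynomial (Fin m) k} (h : φ.IsHomogeneous n)
    {v : Fin m →₀ ℕ} (hv : v ∈ φ.support) : v.degree = n := by
  rw [Finsupp.degree_eq_weight_one]
  exact h (MvPolynomial.mem_support_iff.mp hv)

lemma single_add_sub (s : Fin m →₀ ℕ) (i : Fin m) (h : s i ≠ 0) :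
    Finsupp.single i 1 + (s - Finsupp.single i 1) = s := by
  ext j
  rcases eq_or_ne j i with rfl | hji
  · simp only [Finsupp.add_apply, Finsupp.tsub_apply, Finsupp.single_eq_same]
    omega
  · simp [Finsupp.single_apply, Ne.symm hji]

lemma degree_sub_single (s : Fin m →₀ ℕ) (i : Fin m) (h : s i ≠ 0) :
    (s - Finsupp.single i 1).degree = s.degree - 1 := by
  have key := congrArg Finsupp.degree (single_add_sub s i h)
  rw [Finsupp.degree_eq_weight_one, map_add, ← Finsupp.degree_eq_weight_one] at key
  have h1 : (Finsupp.single i 1 : Fin m →₀ ℕ).degree = 1 := by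
    rw [degree_eq_sum_univ, Finset.sum_eq_single i (fun j _ hj => by
      rw [Finsupp.single_apply, if_neg (Ne.symm hj)]) (fun hi => absurd (Finset.mem_univ i) hi)]
    exact Finsupp.single_eq_same
  rw [h1] at key
  omega

lemma euler_monomial (s : Fin m →₀ ℕ) (a : k) :
    ∑ i, X i * pderiv i (monomial s a) = s.degree • monomial s a := by
  classical
  rw [degree_eq_sum_univ, Finset.sum_smul]
  refine Finset.sum_congr rfl fun i _ => ?_
  rcases eq_or_ne (s i) 0 with h | h
  · simp [h]
  · rw [pderiv_monomial, X, monomial_mul, single_add_sub s i h, one_mul,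
      smul_monomial, nsmul_eq_mul, mul_comm]

lemma euler {n : ℕ} {φ : MvPolynomial (Fin m) k} (h : φ.IsHomogeneous n) :
    ∑ i, X i * pderiv i φ = n • φ := by
  conv_lhs => rw [φ.as_sum]
  conv_rhs => rw [φ.as_sum]
  rw [Finset.smul_sum]
  simp only [map_sum, Finset.mul_sum]
  rw [Finset.sum_comm]
  refine Finset.sum_congr rfl fun v hv => ?_
  rw [euler_monomial, degree_of_mem_support h hv]

lemma pderiv_isHomogeneous {n : ℕ} {φ : MvPolynomial (Fin m) k}
    (h : φ.IsHomogeneous n) (i : Fin m) :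
    (pderiv i φ).IsHomogeneous (n - 1) := by
  classical
  conv_lhs => rw [φ.as_sum]
  rw [map_sum]
  apply MvPolynomial.IsHomogeneous.sum
  intro v hv
  rw [pderiv_monomial]
  rcases eq_or_ne (v i) 0 with h0 | h0
  · simp only [h0, Nat.cast_zero, mul_zero]
    rw [map_zero]
    exact isHomogeneous_zero _ _ _
  · apply isHomogeneous_monomial
    rw [degree_sub_single v i h0, degree_of_mem_support h hv]

lemma pderiv_comm (i j : Fin m) (φ : MvPolynomial (Fin m) k) :
    pderiv i (pderiv j φ) = pderiv j (pderiv i φ) := by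
  classical
  conv_lhs => rw [φ.as_sum]
  conv_rhs => rw [φ.as_sum]
  simp only [map_sum]
  refine Finset.sum_congr rfl fun v _ => ?_
  rcases eq_or_ne i j with rfl | hij
  · rfl
  · rw [pderiv_monomial, pderiv_monomial, pderiv_monomial, pderiv_monomial]
    have h1 : ((v - Finsupp.single j 1 : Fin m →₀ ℕ)) i = v i := by
      rw [Finsupp.tsub_apply, Finsupp.single_apply, if_neg (Ne.symm hij)]
      omega
    have h2 : ((v - Finsupp.single i 1 : Fin m →₀ ℕ)) j = v j := by
      rw [Finsupp.tsub_apply, Finsupp.single_apply, if_neg hij]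
      omega
    have h3 : v - Finsupp.single j 1 - Finsupp.single i 1
        = v - Finsupp.single i 1 - Finsupp.single j 1 := by
      ext l; simp only [Finsupp.tsub_apply]; omega
    rw [h1, h2, h3]; ring_nf

lemma foldl_pderiv_cons (i : Fin m) (l : List (Fin m)) (φ : MvPolynomial (Fin m) k) :
    (i :: l).foldl (fun g j => pderiv j g) φ = l.foldl (fun g j => pderiv j g) (pderiv i φ) :=
  rfl

lemma foldl_pderiv_comm (l : List (Fin m)) (i : Fin m) (φ : MvPolynomial (Fin m) k) :
    l.foldl (fun g j => pderiv j g) (pderiv i φ)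
      = pderiv i (l.foldl (fun g j => pderiv j g) φ) := by
  induction l generalizing φ with
  | nil => rfl
  | cons j l ih =>
      rw [foldl_pderiv_cons, foldl_pderiv_cons, pderiv_comm j i, ih]

lemma foldl_pderiv_smul (l : List (Fin m)) (a : k) (φ : MvPolynomial (Fin m) k) :
    l.foldl (fun g j => pderiv j g) (a • φ) = a • l.foldl (fun g j => pderiv j g) φ := by
  induction l generalizing φ with
  | nil => rfl
  | cons j l ih => rw [foldl_pderiv_cons, foldl_pderiv_cons, Derivation.map_smul, ih]

lemma foldl_pderiv_sum {ι : Type*} (t : Finset ι) (l : List (Fin m))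
    (f : ι → MvPolynomial (Fin m) k) :
    l.foldl (fun g j => pderiv j g) (∑ i ∈ t, f i)
      = ∑ i ∈ t, l.foldl (fun g j => pderiv j g) (f i) := by
  induction l generalizing f with
  | nil => rfl
  | cons j l ih =>
      rw [foldl_pderiv_cons, map_sum]
      exact ih _

lemma foldl_pderiv_isHomogeneous {n : ℕ} (l : List (Fin m)) {φ : MvPolynomial (Fin m) k}
    (h : φ.IsHomogeneous n) :
    (l.foldl (fun g j => pderiv j g) φ).IsHomogeneous (n - l.length) := by
  induction l generalizing φ n with
  | nil => simpa using h
  | cons j l ih =>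
      rw [foldl_pderiv_cons]
      have := ih (pderiv_isHomogeneous h j)
      have he : n - 1 - l.length = n - (j :: l).length := by
        simp only [List.length_cons]; omega
      rwa [he] at this

end PropIVc

section Main

open PropIVc

variable {m : ℕ} {k : Type*} [Field k] [CharZero k]

/-- A homogeneous polynomial all of whose derivatives of order ≤ its degree vanish at `p`
is zero. -/
lemma zero_of_derivs_vanish (p : Fin m → k) :
    ∀ (e : ℕ) (h : MvPolynomial (Fin m) k), h.IsHomogeneous e →
      (∀ l : List (Fin m), l.length ≤ e →
        MvPolynomial.eval p (l.foldl (fun g i => MvPolynomial.pderiv i g) h) = 0) → h = 0 := by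
  intro e
  induction e with
  | zero =>
      intro h hh hl
      have h0 := hl [] (by simp)
      simp only [List.foldl_nil] at h0
      have hC : h = MvPolynomial.C (MvPolynomial.coeff 0 h) := by
        ext v
        rcases eq_or_ne v 0 with rfl | hv
        · simp
        · rw [MvPolynomial.coeff_C, if_neg (Ne.symm hv)]
          by_contra hc
          have := degree_of_mem_support hh (MvPolynomial.mem_support_iff.mpr hc)
          rw [Finsupp.degree_eq_zero_iff] at this
          exact hv this
      rw [hC] at h0 ⊢
      rw [MvPolynomial.eval_C] at h0
      rw [h0, map_zero]
  | succ e ih =>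
      intro h hh hl
      have hp : ∀ i, MvPolynomial.pderiv i h = 0 := by
        intro i
        refine ih _ (by simpa using pderiv_isHomogeneous hh i) (fun l hlen => ?_)
        rw [← foldl_pderiv_cons]
        exact hl (i :: l) (by simpa using Nat.succ_le_succ hlen)
      have he := euler hh
      simp only [hp, mul_zero, Finset.sum_const_zero] at he
      have h2 : ((e + 1 : ℕ) : k) • h = 0 := by
        rw [Nat.cast_smul_eq_nsmul]; exact he.symm
      rcases smul_eq_zero.mp h2 with hc | h0
      · exact absurd hc (by exact_mod_cast Nat.succ_ne_zero e)
      · exact h0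

end Main

/-- **Paper's Proposition IV.c, case `σ = 0`** (after blowing up, the multiplicity strictly
decreases at every point of the exceptional projective space).  Let `k` be a field of
characteristic zero and `V` a set of degree-`d` homogeneous polynomials in `k[x₁,…,x_m]`.  If
every `f ∈ V` vanishes to order at least `d` at the point `p` (all iterated partial
derivatives of total order `< d` vanish at `p`), then the derivation `∑ pᵢ ∂/∂xᵢ`
annihilates every `f ∈ V`.  In particular, if the only `c` with `∑ cᵢ ∂f/∂xᵢ = 0` for all
`f ∈ V` is `c = 0`, then `p = 0`, i.e. at every nonzero point some `f ∈ V` vanishes to order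
strictly less than `d`. -/
theorem prop_IV_c_sigma_zero (k : Type*) [Field k] [CharZero k]
    (m d : ℕ) (hm : 1 ≤ m) (hd : 1 ≤ d)
    (V : Set (MvPolynomial (Fin m) k))
    (hV : ∀ f ∈ V, MvPolynomial.IsHomogeneous f d)
    (p : Fin m → k)
    (hord : ∀ f ∈ V, ∀ l : List (Fin m), l.length < d →
      MvPolynomial.eval p (l.foldl (fun g i => MvPolynomial.pderiv i g) f) = 0) :
    (∀ f ∈ V, (∑ i, p i • MvPolynomial.pderiv i f) = 0) ∧
    ((∀ c : Fin m → k, (∀ f ∈ V, (∑ i, c i • MvPolynomial.pderiv i f) = 0) → c = 0) →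
      p = 0) := by
  have main : ∀ f ∈ V, (∑ i, p i • MvPolynomial.pderiv i f) = 0 := by
    intro f hf
    set g : MvPolynomial (Fin m) k := ∑ i, p i • MvPolynomial.pderiv i f with hg
    have hghom : g.IsHomogeneous (d - 1) := by
      apply MvPolynomial.IsHomogeneous.sum
      intro i _
      rw [MvPolynomial.smul_eq_C_mul]
      exact (PropIVc.pderiv_isHomogeneous (hV f hf) i).C_mul (p i)
    refine zero_of_derivs_vanish p (d - 1) g hghom (fun l hlen => ?_)
    set F := l.foldl (fun g i => MvPolynomial.pderiv i g) f with hF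
    have hFhom : F.IsHomogeneous (d - l.length) :=
      PropIVc.foldl_pderiv_isHomogeneous l (hV f hf)
    have heval : ∑ i, p i * MvPolynomial.eval p (MvPolynomial.pderiv i F) = 0 := by
      have h1 := congrArg (MvPolynomial.eval p) (PropIVc.euler hFhom)
      have hF0 : MvPolynomial.eval p F = 0 := hord f hf l (by omega)
      simp only [map_sum, map_mul, MvPolynomial.eval_X, map_nsmul, hF0,
        smul_zero] at h1
      exact h1
    have hrw : l.foldl (fun g i => MvPolynomial.pderiv i g) g
        = ∑ i, p i • MvPolynomial.pderiv i F := by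
      rw [hg, PropIVc.foldl_pderiv_sum]
      refine Finset.sum_congr rfl fun i _ => ?_
      rw [PropIVc.foldl_pderiv_smul, PropIVc.foldl_pderiv_comm]
    rw [hrw, map_sum]
    simpa only [MvPolynomial.smul_eval] using heval
  refine ⟨main, fun hc => hc p main⟩
end
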